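/- arXiv:2007.06208 — 2 statements merged into one kernel-verified Lean document; each statement's English description precedes it below -/
import Mathlib

section
/- The polynomial [(1 + t^(2n+2))(1 + t^6) - t^2(1 + t^2)(t^4 + t^(2n-2))] · (1 - t^(2n+2))(1 - t^(2n))(1 - t^(2n-2)) is divisible by (1 - t^2)^3 (1 - t^4)^2 in ℤ[t] for every integer n ≥ 2. -/
/-!
The bracket factors as `(1 - t^8)(1 - t^(2n))`, so the numerator is a product of five factors
`1 - t^e` with `e ∈ {8, 2n, 2n + 2, 2n, 2n - 2}`, all even. Since `1 - t^a ∣ 1 - t^b` whenever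
`a ∣ b`, it suffices that two of these exponents are multiples of `4` and the remaining three are
even: for `n` even take `2n` twice, for `n` odd take `2n + 2` and `2n - 2`.
-/

open Polynomial

theorem one_sub_pow_dvd_one_sub_pow_of_dvd {R : Type*} [Ring R] (x : R) {a b : ℕ} (h : a ∣ b) :
    1 - x ^ a ∣ 1 - x ^ b := by
  obtain ⟨k, rfl⟩ := h
  rw [pow_mul]
  exact one_sub_dvd_one_sub_pow _ k

section CommRing

variable {R : Type*} [CommRing R] (x : R)

theorem one_sub_sq_cube_mul_one_sub_pow_four_sq_dvd {a b c d e : ℕ}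
    (ha : 2 ∣ a) (hb : 2 ∣ b) (hc : 2 ∣ c) (hd : 4 ∣ d) (he : 4 ∣ e) :
    (1 - x ^ 2) ^ 3 * (1 - x ^ 4) ^ 2 ∣
      (1 - x ^ a) * (1 - x ^ b) * (1 - x ^ c) * ((1 - x ^ d) * (1 - x ^ e)) := by
  have h2 : (1 - x ^ 2) ^ 3 ∣ (1 - x ^ a) * (1 - x ^ b) * (1 - x ^ c) := by
    rw [pow_three, ← mul_assoc]
    exact mul_dvd_mul (mul_dvd_mul (one_sub_pow_dvd_one_sub_pow_of_dvd x ha)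
      (one_sub_pow_dvd_one_sub_pow_of_dvd x hb)) (one_sub_pow_dvd_one_sub_pow_of_dvd x hc)
  have h4 : (1 - x ^ 4) ^ 2 ∣ (1 - x ^ d) * (1 - x ^ e) := by
    rw [sq]
    exact mul_dvd_mul (one_sub_pow_dvd_one_sub_pow_of_dvd x hd)
      (one_sub_pow_dvd_one_sub_pow_of_dvd x he)
  exact mul_dvd_mul h2 h4

theorem poincare_bracket_eq {n : ℕ} (hn : 1 ≤ n) :
    (1 + x ^ (2 * n + 2)) * (1 + x ^ 6) - x ^ 2 * (1 + x ^ 2) * (x ^ 4 + x ^ (2 * n - 2)) =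
      (1 - x ^ 8) * (1 - x ^ (2 * n)) := by
  obtain ⟨m, rfl⟩ := Nat.exists_eq_add_of_le' hn
  rw [show 2 * (m + 1) - 2 = 2 * m by omega]
  ring

end CommRing

/-- For every `n ≥ 2`, `(1 - t^2)^3 (1 - t^4)^2` divides
`[(1 + t^(2n+2))(1 + t^6) - t^2(1 + t^2)(t^4 + t^(2n-2))] ·
(1 - t^(2n+2))(1 - t^(2n))(1 - t^(2n-2))` in `ℤ[t]`
(Poincaré polynomial of `K_n = M₀(Gr(2,n+1),2)`). -/
theorem poincare_Kn_is_polynomial (n : ℕ) (hn : 2 ≤ n) :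
    ((1 - X ^ 2) ^ 3 * (1 - X ^ 4) ^ 2 : ℤ[X]) ∣
      ((1 + X ^ (2 * n + 2)) * (1 + X ^ 6) -
          X ^ 2 * (1 + X ^ 2) * (X ^ 4 + X ^ (2 * n - 2))) *
        ((1 - X ^ (2 * n + 2)) * (1 - X ^ (2 * n)) * (1 - X ^ (2 * n - 2))) := by
  rw [poincare_bracket_eq _ (by omega : 1 ≤ n)]
  rcases Nat.even_or_odd n with ⟨k, rfl⟩ | ⟨k, rfl⟩
  · refine (one_sub_sq_cube_mul_one_sub_pow_four_sq_dvd X (a := 8) (b := 2 * (k + k) + 2)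
      (c := 2 * (k + k) - 2) (d := 2 * (k + k)) (e := 2 * (k + k))
      (by norm_num) (by omega) (by omega) (by omega) (by omega)).trans (dvd_of_eq ?_)
    ring
  · refine (one_sub_sq_cube_mul_one_sub_pow_four_sq_dvd X (a := 8) (b := 2 * (2 * k + 1))
      (c := 2 * (2 * k + 1)) (d := 2 * (2 * k + 1) + 2) (e := 2 * (2 * k + 1) - 2)
      (by norm_num) (by omega) (by omega) (by omega) (by omega)).trans (dvd_of_eq ?_)
    ring
end

section
/- For every integer n ≥ 2, the polynomial (1 - t^(2n)) · [(1 - t^(2n+2))(1 - t^(2n-2)) - t^2(1 - t^(4⌊(n-1)/2⌋))(1 - t^(4⌊n/2⌋))] is divisible by (1 - t^2)^2 (1 - t^4) in ℤ[t]. -/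
/-!
Write `q = t ^ 2`; the claim is `(1 - q) ^ 2 (1 - q ^ 2) ∣ (1 - q ^ n) B(n)`. The bracket factors as
`B(2m + 2) = (1 - q) (1 - q ^ (4m + 3))` and `B(2m + 1) = (1 - q) (1 + q ^ (2m + 1)) (1 - q ^ (2m))`.
Since `1 - x ∣ 1 - x ^ k`, for even `n` the bracket supplies `(1 - q) ^ 2` and `1 - q ^ n` supplies
`1 - q ^ 2`; for odd `n` the factor `1 - q ^ n` supplies `1 - q` and the bracket `(1 - q) (1 - q ^ 2)`.
-/

open Polynomial

variable {R : Type*} [CommRing R]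

/-- The bracket `B(n)` of the theorem, written in `q = t ^ 2`. -/
def poincareBracket (q : R) (n : ℕ) : R :=
  (1 - q ^ (n + 1)) * (1 - q ^ (n - 1)) -
    q * (1 - q ^ (2 * ((n - 1) / 2))) * (1 - q ^ (2 * (n / 2)))

lemma poincareBracket_two_mul_add_two (q : R) (m : ℕ) :
    poincareBracket q (2 * m + 2) = (1 - q) * (1 - q ^ (4 * m + 3)) := by
  rw [poincareBracket, show (2 * m + 2 - 1) / 2 = m by omega, show (2 * m + 2) / 2 = m + 1 by omega,
    show 2 * m + 2 - 1 = 2 * m + 1 by omega]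
  ring

lemma poincareBracket_two_mul_add_one (q : R) (m : ℕ) :
    poincareBracket q (2 * m + 1) = (1 - q) * (1 + q ^ (2 * m + 1)) * (1 - q ^ (2 * m)) := by
  rw [poincareBracket, show (2 * m + 1 - 1) / 2 = m by omega, show (2 * m + 1) / 2 = m by omega,
    Nat.add_sub_cancel]
  ring

lemma one_sub_sq_mul_one_sub_sq_dvd_one_sub_pow_mul_poincareBracket (q : R) (n : ℕ) :
    (1 - q) ^ 2 * (1 - q ^ 2) ∣ (1 - q ^ n) * poincareBracket q n := by
  obtain ⟨m, rfl | rfl⟩ := Nat.even_or_odd' n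
  · cases m with
    | zero => simp
    | succ m =>
      have h_pow : 1 - q ^ 2 ∣ 1 - q ^ (2 * (m + 1)) := pow_mul q 2 _ ▸ one_sub_dvd_one_sub_pow _ _
      have h_bracket : (1 - q) ^ 2 ∣ poincareBracket q (2 * (m + 1)) := by
        rw [mul_add_one, poincareBracket_two_mul_add_two, sq]
        exact mul_dvd_mul_left _ (one_sub_dvd_one_sub_pow _ _)
      rw [mul_comm (1 - q ^ _)]
      exact mul_dvd_mul h_bracket h_pow
  · have h_bracket : (1 - q) * (1 - q ^ 2) ∣ poincareBracket q (2 * m + 1) := by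
      rw [poincareBracket_two_mul_add_one, pow_mul]
      exact mul_dvd_mul (dvd_mul_right _ _) (one_sub_dvd_one_sub_pow _ _)
    rw [sq, mul_assoc]
    exact mul_dvd_mul (one_sub_dvd_one_sub_pow _ _) h_bracket

theorem ip_git_quotient_is_polynomial_general (n : ℕ) :
    ((1 - X ^ 2) ^ 2 * (1 - X ^ 4) : ℤ[X]) ∣
      (1 - X ^ (2 * n)) *
        ((1 - X ^ (2 * n + 2)) * (1 - X ^ (2 * n - 2)) -
          X ^ 2 * (1 - X ^ (4 * ((n - 1) / 2))) * (1 - X ^ (4 * (n / 2)))) := by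
  have h := one_sub_sq_mul_one_sub_sq_dvd_one_sub_pow_mul_poincareBracket (X ^ 2 : ℤ[X]) n
  simp only [poincareBracket, ← pow_mul, mul_add, mul_one, Nat.mul_sub_one, ← mul_assoc] at h
  norm_num at h
  exact h

/-- For every `n ≥ 2`, `(1 - t^2)^2 (1 - t^4)` divides
`(1 - t^(2n)) · [(1 - t^(2n+2))(1 - t^(2n-2)) - t^2(1 - t^(4⌊(n-1)/2⌋))(1 - t^(4⌊n/2⌋))]`
in `ℤ[t]` (intersection Poincaré polynomial of `ℙ(Sym²ℂ²⊗ℂⁿ)//SL(2)`). -/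
theorem ip_git_quotient_is_polynomial (n : ℕ) (hn : 2 ≤ n) :
    ((1 - X ^ 2) ^ 2 * (1 - X ^ 4) : ℤ[X]) ∣
      (1 - X ^ (2 * n)) *
        ((1 - X ^ (2 * n + 2)) * (1 - X ^ (2 * n - 2)) -
          X ^ 2 * (1 - X ^ (4 * ((n - 1) / 2))) * (1 - X ^ (4 * (n / 2)))) :=
  ip_git_quotient_is_polynomial_general n
end
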